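/- Under the setting of the paper, the system Σ_m = (A, E_a, C_d, 0) (with A the closed-loop 3N×3N matrix built from a connected undirected graph Laplacian L and positive diagonal M, H, Θ, Φ, parameters κ_D, τ > 0) has no invariant zero on the positive real line: for every real λ > 0, every attack index a, and every detection index d, λ is not an invariant zero of Σ_m. -/

import Mathlib

/-!
Eliminating the velocity and filter states, an invariant zero `λ > 0` yields a nonzero vector `u`
with `Q(λ) u = g mₐ eₐ` and `u_d = 0`, where `Q(λ) = L + diag(θ + λ²m + λh + λκ/(τλ+1) φ)` is a
weighted graph Laplacian plus a positive diagonal. Such a matrix obeys a minimum principle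
(`Q v ≥ 0 → v ≥ 0`), and if `Q v ≥ 0` is positive at the attacked node `a`, positivity of `v`
spreads from `a` along the edges of the connected graph, so `v > 0` everywhere. Hence the real and
imaginary parts of `u` (which solve `Q v = c eₐ` with `c` real) are either of strict sign
everywhere, contradicting `u_d = 0`, or vanish identically.
-/

open Matrix

/-- A 3×3 block matrix with `N × N` blocks. -/
def blk3 {α : Type*} {N : ℕ} (A11 A12 A13 A21 A22 A23 A31 A32 A33 : Matrix (Fin N) (Fin N) α) :
    Matrix (Fin N ⊕ (Fin N ⊕ Fin N)) (Fin N ⊕ (Fin N ⊕ Fin N)) α :=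
  Matrix.of fun i j =>
    match i, j with
    | .inl i, .inl j => A11 i j
    | .inl i, .inr (.inl j) => A12 i j
    | .inl i, .inr (.inr j) => A13 i j
    | .inr (.inl i), .inl j => A21 i j
    | .inr (.inl i), .inr (.inl j) => A22 i j
    | .inr (.inl i), .inr (.inr j) => A23 i j
    | .inr (.inr i), .inl j => A31 i j
    | .inr (.inr i), .inr (.inl j) => A32 i j
    | .inr (.inr i), .inr (.inr j) => A33 i j

/-- `lam` is a finite invariant zero of the strictly proper SISO system `(F, B, C, 0)`. -/
def IsInvariantZero {n : Type*} [Fintype n] [DecidableEq n]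
    (F : Matrix n n ℂ) (B C : n → ℂ) (lam : ℂ) : Prop :=
  ∃ x : n → ℂ, x ≠ 0 ∧ ∃ g : ℂ,
    (lam • (1 : Matrix n n ℂ) - F) *ᵥ x = g • B ∧ C ⬝ᵥ x = 0

def weightedLaplacian {n : Type*} [Fintype n] [DecidableEq n] (a : Matrix n n ℝ) : Matrix n n ℝ :=
  diagonal (fun i => ∑ k, a i k) - a

section WeightedLaplacian

variable {n : Type*} [Fintype n] [DecidableEq n] {a : Matrix n n ℝ} {p v : n → ℝ}

theorem weightedLaplacian_eq_of_diag_eq_zero (ha : ∀ i, a i i = 0) :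
    weightedLaplacian a = of fun i j => if i = j then ∑ k, a i k else -(a i j) := by
  ext i j
  by_cases hij : i = j
  · subst hij; simp [weightedLaplacian, ha]
  · simp [weightedLaplacian, hij]

theorem diagonal_add_weightedLaplacian_mulVec_apply (p v : n → ℝ) (i : n) :
    ((diagonal p + weightedLaplacian a) *ᵥ v) i = p i * v i + ∑ k, a i k * (v i - v k) := by
  rw [weightedLaplacian, add_mulVec, sub_mulVec, Pi.add_apply, Pi.sub_apply, mulVec_diagonal,
    mulVec_diagonal]
  simp only [mulVec, dotProduct, Finset.sum_mul, mul_sub, Finset.sum_sub_distrib]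

theorem nonneg_of_diagonal_add_weightedLaplacian_mulVec_nonneg (ha : ∀ i j, 0 ≤ a i j)
    (hp : ∀ i, 0 < p i) (hv : 0 ≤ (diagonal p + weightedLaplacian a) *ᵥ v) : 0 ≤ v := by
  intro i
  obtain ⟨j, -, hj⟩ := Finset.exists_min_image Finset.univ v ⟨i, Finset.mem_univ i⟩
  by_contra! hvi
  have hvj : v j < 0 := (hj i (Finset.mem_univ i)).trans_lt hvi
  have hsum : ∑ k, a j k * (v j - v k) ≤ 0 :=
    Finset.sum_nonpos fun k _ => mul_nonpos_of_nonneg_of_nonpos (ha j k)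
      (sub_nonpos.mpr (hj k (Finset.mem_univ k)))
  have := hv j
  rw [Pi.zero_apply, diagonal_add_weightedLaplacian_mulVec_apply] at this
  linarith [mul_neg_of_pos_of_neg (hp j) hvj]

theorem diagonal_add_weightedLaplacian_mulVec_eq_zero_of_eq_zero (ha : ∀ i j, 0 ≤ a i j)
    (hv₀ : 0 ≤ v) (hv : 0 ≤ (diagonal p + weightedLaplacian a) *ᵥ v) {c : n} (hc : v c = 0) :
    ((diagonal p + weightedLaplacian a) *ᵥ v) c = 0 ∧ ∀ k, a c k * v k = 0 := by
  have hterms : ∀ k ∈ Finset.univ, 0 ≤ a c k * v k := fun k _ => mul_nonneg (ha c k) (hv₀ k)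
  have hQ : ((diagonal p + weightedLaplacian a) *ᵥ v) c = -∑ k, a c k * v k := by
    simp [diagonal_add_weightedLaplacian_mulVec_apply, hc]
  have hQc := hv c
  rw [Pi.zero_apply, hQ, neg_nonneg] at hQc
  have hsum : ∑ k, a c k * v k = 0 := le_antisymm hQc (Finset.sum_nonneg hterms)
  refine ⟨by rw [hQ, hsum, neg_zero], fun k => ?_⟩
  exact (Finset.sum_eq_zero_iff_of_nonneg hterms).mp hsum k (Finset.mem_univ k)

theorem pos_of_diagonal_add_weightedLaplacian_mulVec_nonneg (ha : ∀ i j, 0 ≤ a i j)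
    (hp : ∀ i, 0 < p i) {r : n} (hconn : ∀ j, Relation.ReflTransGen (fun u w => a u w ≠ 0) j r)
    (hv : 0 ≤ (diagonal p + weightedLaplacian a) *ᵥ v)
    (hr : 0 < ((diagonal p + weightedLaplacian a) *ᵥ v) r) (j : n) : 0 < v j := by
  have hv₀ := nonneg_of_diagonal_add_weightedLaplacian_mulVec_nonneg ha hp hv
  induction hconn j using Relation.ReflTransGen.head_induction_on with
  | refl =>
    refine (hv₀ r).lt_of_ne fun h => hr.ne' ?_
    exact (diagonal_add_weightedLaplacian_mulVec_eq_zero_of_eq_zero ha hv₀ hv h.symm).1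
  | @head c b hcb _ ih =>
    refine (hv₀ _).lt_of_ne fun h => ?_
    have := (diagonal_add_weightedLaplacian_mulVec_eq_zero_of_eq_zero ha hv₀ hv h.symm).2 b
    exact (mul_ne_zero hcb ih.ne') this

theorem eq_zero_of_diagonal_add_weightedLaplacian_mulVec_eq_smul_single (ha : ∀ i j, 0 ≤ a i j)
    (hp : ∀ i, 0 < p i) {r : n} (hconn : ∀ j, Relation.ReflTransGen (fun u w => a u w ≠ 0) j r)
    {c : ℝ} (hv : (diagonal p + weightedLaplacian a) *ᵥ v = c • Pi.single r 1) {d : n}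
    (hd : v d = 0) : v = 0 := by
  have pos_at_d {w : n → ℝ} {c : ℝ} (hc : 0 < c)
      (hw : (diagonal p + weightedLaplacian a) *ᵥ w = c • Pi.single r 1) : 0 < w d := by
    refine pos_of_diagonal_add_weightedLaplacian_mulVec_nonneg ha hp hconn ?_ ?_ d <;> rw [hw]
    · exact smul_nonneg hc.le (Pi.single_nonneg.mpr zero_le_one)
    · simpa using hc
  have hneg : (diagonal p + weightedLaplacian a) *ᵥ -v = -c • Pi.single r 1 := by
    rw [mulVec_neg, hv, neg_smul]
  rcases lt_trichotomy c 0 with hc | rfl | hc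
  · simpa [hd] using pos_at_d (neg_pos.mpr hc) hneg
  · rw [zero_smul] at hv
    rw [neg_zero, zero_smul] at hneg
    refine le_antisymm ?_ (nonneg_of_diagonal_add_weightedLaplacian_mulVec_nonneg ha hp hv.ge)
    exact neg_nonneg.mp (nonneg_of_diagonal_add_weightedLaplacian_mulVec_nonneg ha hp hneg.ge)
  · simpa [hd] using pos_at_d hc hv

end WeightedLaplacian

theorem re_map_ofReal_mulVec {n : Type*} [Fintype n] (Q : Matrix n n ℝ) (z : n → ℂ) (i : n) :
    ((Q.map (↑) *ᵥ z) i).re = (Q *ᵥ fun j => (z j).re) i := by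
  simp [mulVec, dotProduct, Complex.re_sum]

theorem im_map_ofReal_mulVec {n : Type*} [Fintype n] (Q : Matrix n n ℝ) (z : n → ℂ) (i : n) :
    ((Q.map (↑) *ᵥ z) i).im = (Q *ᵥ fun j => (z j).im) i := by
  simp [mulVec, dotProduct, Complex.im_sum]

theorem eq_zero_of_map_ofReal_mulVec_eq_smul_single {n : Type*} [Fintype n] [DecidableEq n]
    {a : Matrix n n ℝ} {p : n → ℝ} (ha : ∀ i j, 0 ≤ a i j) (hp : ∀ i, 0 < p i) {r : n}
    (hconn : ∀ j, Relation.ReflTransGen (fun u w => a u w ≠ 0) j r) {z : n → ℂ} {c : ℂ}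
    (hz : (diagonal p + weightedLaplacian a).map (↑) *ᵥ z = c • Pi.single r 1) {d : n}
    (hd : z d = 0) : z = 0 := by
  have hre : (diagonal p + weightedLaplacian a) *ᵥ (fun j => (z j).re) = c.re • Pi.single r 1 := by
    funext i
    rw [← re_map_ofReal_mulVec, hz]
    by_cases hi : i = r <;> simp [hi]
  have him : (diagonal p + weightedLaplacian a) *ᵥ (fun j => (z j).im) = c.im • Pi.single r 1 := by
    funext i
    rw [← im_map_ofReal_mulVec, hz]
    by_cases hi : i = r <;> simp [hi]
  have hre₀ := eq_zero_of_diagonal_add_weightedLaplacian_mulVec_eq_smul_single ha hp hconn hre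
    (d := d) (by simp [hd])
  have him₀ := eq_zero_of_diagonal_add_weightedLaplacian_mulVec_eq_smul_single ha hp hconn him
    (d := d) (by simp [hd])
  funext j
  exact Complex.ext (congrFun hre₀ j) (congrFun him₀ j)

theorem blk3_mulVec {α : Type*} [NonUnitalNonAssocSemiring α] {N : ℕ}
    (A11 A12 A13 A21 A22 A23 A31 A32 A33 : Matrix (Fin N) (Fin N) α)
    (x : Fin N ⊕ (Fin N ⊕ Fin N) → α) :
    blk3 A11 A12 A13 A21 A22 A23 A31 A32 A33 *ᵥ x =
      let x₁ := fun i => x (.inl i)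
      let x₂ := fun i => x (.inr (.inl i))
      let x₃ := fun i => x (.inr (.inr i))
      Sum.elim (A11 *ᵥ x₁ + A12 *ᵥ x₂ + A13 *ᵥ x₃)
        (Sum.elim (A21 *ᵥ x₁ + A22 *ᵥ x₂ + A23 *ᵥ x₃) (A31 *ᵥ x₁ + A32 *ᵥ x₂ + A33 *ᵥ x₃)) := by
  funext i
  rcases i with i | i | i <;>
    simp [blk3, mulVec, dotProduct, Fintype.sum_sum_type, add_assoc]

theorem inv_diagonal_of_ne_zero {n K : Type*} [Fintype n] [DecidableEq n] [Field K] {m : n → K}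
    (hm : ∀ i, m i ≠ 0) : (diagonal m)⁻¹ = diagonal m⁻¹ :=
  inv_eq_left_inv (by simp [diagonal_mul_diagonal, hm])

-- States are ordered (position, velocity, filter); `A` of the theorem is this matrix over `ℂ`.
noncomputable def closedLoopMatrix {K : Type*} [Field K] {N : ℕ} (L : Matrix (Fin N) (Fin N) K)
    (m h θ φ : Fin N → K) (κ τ : K) :
    Matrix (Fin N ⊕ (Fin N ⊕ Fin N)) (Fin N ⊕ (Fin N ⊕ Fin N)) K :=
  blk3 0 1 0
    (-((diagonal m)⁻¹ * (L + diagonal θ))) (-((diagonal m)⁻¹ * diagonal h))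
    ((diagonal m)⁻¹ * diagonal φ)
    0 (-((κ / τ) • 1)) (-(τ⁻¹ • 1))

section ClosedLoop

variable {K : Type*} [Field K] {N : ℕ} {L : Matrix (Fin N) (Fin N) K} {m h θ φ : Fin N → K}
  {κ τ lam g : K} {r : Fin N} {x : Fin N ⊕ (Fin N ⊕ Fin N) → K}

theorem closedLoopMatrix_mulVec_inl (i : Fin N) :
    (closedLoopMatrix L m h θ φ κ τ *ᵥ x) (.inl i) = x (.inr (.inl i)) := by
  simp [closedLoopMatrix, blk3_mulVec]

theorem closedLoopMatrix_mulVec_inr_inl (hm : ∀ i, m i ≠ 0) (i : Fin N) :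
    (closedLoopMatrix L m h θ φ κ τ *ᵥ x) (.inr (.inl i)) =
      -(m i)⁻¹ * ((L *ᵥ fun j => x (.inl j)) i + θ i * x (.inl i) + h i * x (.inr (.inl i)) -
        φ i * x (.inr (.inr i))) := by
  simp [closedLoopMatrix, blk3_mulVec, inv_diagonal_of_ne_zero hm, neg_mulVec, ← mulVec_mulVec,
    add_mulVec, mulVec_diagonal]
  ring

theorem closedLoopMatrix_mulVec_inr_inr (i : Fin N) :
    (closedLoopMatrix L m h θ φ κ τ *ᵥ x) (.inr (.inr i)) =
      -(κ / τ) * x (.inr (.inl i)) - τ⁻¹ * x (.inr (.inr i)) := by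
  simp [closedLoopMatrix, blk3_mulVec, neg_mulVec, smul_mulVec]
  ring

variable (hx : (lam • 1 - closedLoopMatrix L m h θ φ κ τ) *ᵥ x =
    g • Sum.elim (0 : Fin N → K) (Sum.elim (Pi.single r 1) 0))
include hx

theorem closedLoop_apply (j : Fin N ⊕ (Fin N ⊕ Fin N)) :
    lam * x j - (closedLoopMatrix L m h θ φ κ τ *ᵥ x) j =
      g * Sum.elim (0 : Fin N → K) (Sum.elim (Pi.single r 1) 0) j := by
  simpa [sub_mulVec, smul_mulVec] using congrFun hx j

theorem closedLoop_inr_inl (i : Fin N) : x (.inr (.inl i)) = lam * x (.inl i) := by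
  have := closedLoop_apply hx (.inl i)
  rw [closedLoopMatrix_mulVec_inl, Sum.elim_inl, Pi.zero_apply, mul_zero] at this
  linear_combination -this

theorem closedLoop_inr_inr (hτ : τ ≠ 0) (hτlam : τ * lam + 1 ≠ 0) (i : Fin N) :
    x (.inr (.inr i)) = -(κ * lam / (τ * lam + 1)) * x (.inl i) := by
  have := closedLoop_apply hx (.inr (.inr i))
  rw [closedLoopMatrix_mulVec_inr_inr, closedLoop_inr_inl hx, Sum.elim_inr, Sum.elim_inr,
    Pi.zero_apply, mul_zero] at this
  rw [eq_comm, neg_mul, neg_eq_iff_eq_neg, div_mul_eq_mul_div, div_eq_iff hτlam]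
  field_simp at this
  linear_combination this

theorem closedLoop_reduced (hm : ∀ i, m i ≠ 0) (hτ : τ ≠ 0) (hτlam : τ * lam + 1 ≠ 0) :
    (L + diagonal fun i => θ i + lam ^ 2 * m i + lam * h i + lam * κ / (τ * lam + 1) * φ i) *ᵥ
      (fun i => x (.inl i)) = (g * m r) • Pi.single r 1 := by
  funext i
  have := closedLoop_apply hx (.inr (.inl i))
  rw [closedLoopMatrix_mulVec_inr_inl hm, closedLoop_inr_inr hx hτ hτlam, closedLoop_inr_inl hx,
    Sum.elim_inr, Sum.elim_inl] at this
  have hscaled : (L *ᵥ fun j => x (.inl j)) i + (θ i + lam ^ 2 * m i + lam * h i +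
      lam * κ / (τ * lam + 1) * φ i) * x (.inl i) = m i * (g * (Pi.single r 1 : Fin N → K) i) := by
    rw [← this]
    field_simp [hm i]
    ring
  rw [add_mulVec, Pi.add_apply, mulVec_diagonal, hscaled]
  rcases eq_or_ne i r with rfl | hi
  · simp [mul_comm]
  · simp [hi]

end ClosedLoop

theorem stmt12_general {N : ℕ} (a : Matrix (Fin N) (Fin N) ℝ)
    (ha_nonneg : ∀ i j, 0 ≤ a i j)
    (ha_diag : ∀ i, a i i = 0)
    (ha_conn : ∀ i j : Fin N, Relation.ReflTransGen (fun u v => a u v ≠ 0) i j)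
    (L : Matrix (Fin N) (Fin N) ℝ)
    (hL : L = Matrix.of fun i j => if i = j then ∑ k, a i k else -(a i j))
    (θ m h φ : Fin N → ℝ)
    (hθ : ∀ i, 0 < θ i) (hm : ∀ i, 0 < m i) (hh : ∀ i, 0 < h i) (hφ : ∀ i, 0 < φ i)
    (κ τ : ℝ) (hκ : 0 < κ) (hτ : 0 < τ)
    (Lc Mc Hc Θc Φc : Matrix (Fin N) (Fin N) ℂ)
    (hLc : Lc = L.map (Complex.ofReal ·))
    (hMc : Mc = Matrix.diagonal fun i => (m i : ℂ))
    (hHc : Hc = Matrix.diagonal fun i => (h i : ℂ))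
    (hΘc : Θc = Matrix.diagonal fun i => (θ i : ℂ))
    (hΦc : Φc = Matrix.diagonal fun i => (φ i : ℂ))
    (A : Matrix (Fin N ⊕ (Fin N ⊕ Fin N)) (Fin N ⊕ (Fin N ⊕ Fin N)) ℂ)
    (hA : A = blk3 0 1 0
      (-(Mc⁻¹ * (Lc + Θc))) (-(Mc⁻¹ * Hc)) (Mc⁻¹ * Φc)
      0 (-(((κ : ℂ) / (τ : ℂ)) • (1 : Matrix (Fin N) (Fin N) ℂ)))
      (-((τ : ℂ)⁻¹ • (1 : Matrix (Fin N) (Fin N) ℂ)))) :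
    ∀ lam : ℝ, 0 < lam → ∀ ia d : Fin N,
      ¬ IsInvariantZero A
        (Sum.elim (0 : Fin N → ℂ) (Sum.elim (Pi.single ia 1) (0 : Fin N → ℂ)))
        (Sum.elim (Pi.single d 1) (0 : (Fin N ⊕ Fin N) → ℂ)) (lam : ℂ) := by
  rintro lam hlam ia d ⟨x, hx_ne, g, hx, hCx⟩
  subst hL hLc hMc hHc hΘc hΦc hA
  have hτlam : (τ : ℂ) * lam + 1 ≠ 0 := by exact_mod_cast (by positivity : τ * lam + 1 ≠ 0)
  have hm₀ : ∀ i, (m i : ℂ) ≠ 0 := fun i => Complex.ofReal_ne_zero.mpr (hm i).ne'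
  have hτ₀ : (τ : ℂ) ≠ 0 := Complex.ofReal_ne_zero.mpr hτ.ne'
  change (_ - closedLoopMatrix _ (fun i => (m i : ℂ)) (fun i => (h i : ℂ)) (fun i => (θ i : ℂ))
    (fun i => (φ i : ℂ)) κ τ) *ᵥ x = _ at hx
  set p : Fin N → ℝ := fun i => θ i + lam ^ 2 * m i + lam * h i + lam * κ / (τ * lam + 1) * φ i
  have hp : ∀ i, 0 < p i := fun i => by
    have := hθ i; have := hm i; have := hh i; have := hφ i; positivity
  have hQ : (diagonal p + weightedLaplacian a).map (↑) *ᵥ (fun i => x (.inl i)) =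
      (g * m ia) • Pi.single ia 1 := by
    rw [← closedLoop_reduced hx hm₀ hτ₀ hτlam, weightedLaplacian_eq_of_diag_eq_zero ha_diag,
      Matrix.map_add _ Complex.ofReal_add, add_comm, diagonal_map (by simp)]
    simp [p]
  have hd : x (.inl d) = 0 := by
    simpa [dotProduct, Fintype.sum_sum_type, Pi.single_apply] using hCx
  have hu : ∀ i, x (.inl i) = 0 := congrFun <|
    eq_zero_of_map_ofReal_mulVec_eq_smul_single ha_nonneg hp (fun j => ha_conn j ia) hQ hd
  refine hx_ne (funext fun j => ?_)
  rcases j with i | i | i <;>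
    simp [hu, closedLoop_inr_inl hx, closedLoop_inr_inr hx hτ₀ hτlam]

/-- The system `Σ_m = (A, E_a, C_d, 0)`, with `A` the closed-loop 3N×3N
matrix built from a connected undirected graph Laplacian `L` and positive diagonal
`M, H, Θ, Φ` and `κ_D, τ > 0`, has no invariant zero on the positive real line, for
every attack index `a` and detection index `d`. -/
theorem stmt12 {N : ℕ} (a : Matrix (Fin N) (Fin N) ℝ)
    (ha_symm : ∀ i j, a i j = a j i) (ha_nonneg : ∀ i j, 0 ≤ a i j)
    (ha_diag : ∀ i, a i i = 0)
    (ha_conn : ∀ i j : Fin N, Relation.ReflTransGen (fun u v => a u v ≠ 0) i j)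
    (L : Matrix (Fin N) (Fin N) ℝ)
    (hL : L = Matrix.of fun i j => if i = j then ∑ k, a i k else -(a i j))
    (θ m h φ : Fin N → ℝ)
    (hθ : ∀ i, 0 < θ i) (hm : ∀ i, 0 < m i) (hh : ∀ i, 0 < h i) (hφ : ∀ i, 0 < φ i)
    (κ τ : ℝ) (hκ : 0 < κ) (hτ : 0 < τ)
    (Lc Mc Hc Θc Φc : Matrix (Fin N) (Fin N) ℂ)
    (hLc : Lc = L.map (Complex.ofReal ·))
    (hMc : Mc = Matrix.diagonal fun i => (m i : ℂ))
    (hHc : Hc = Matrix.diagonal fun i => (h i : ℂ))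
    (hΘc : Θc = Matrix.diagonal fun i => (θ i : ℂ))
    (hΦc : Φc = Matrix.diagonal fun i => (φ i : ℂ))
    (A : Matrix (Fin N ⊕ (Fin N ⊕ Fin N)) (Fin N ⊕ (Fin N ⊕ Fin N)) ℂ)
    (hA : A = blk3 0 1 0
      (-(Mc⁻¹ * (Lc + Θc))) (-(Mc⁻¹ * Hc)) (Mc⁻¹ * Φc)
      0 (-(((κ : ℂ) / (τ : ℂ)) • (1 : Matrix (Fin N) (Fin N) ℂ)))
      (-((τ : ℂ)⁻¹ • (1 : Matrix (Fin N) (Fin N) ℂ)))) :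
    ∀ lam : ℝ, 0 < lam → ∀ ia d : Fin N,
      ¬ IsInvariantZero A
        (Sum.elim (0 : Fin N → ℂ) (Sum.elim (Pi.single ia 1) (0 : Fin N → ℂ)))
        (Sum.elim (Pi.single d 1) (0 : (Fin N ⊕ Fin N) → ℂ)) (lam : ℂ) :=
  stmt12_general a ha_nonneg ha_diag ha_conn L hL θ m h φ hθ hm hh hφ κ τ hκ hτ Lc Mc Hc Θc Φc hLc
    hMc hHc hΘc hΦc A hA
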